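/- Let X, Y, U, Z be finite random variables with joint pmf p satisfying the Markov chains U - X - (Y,Z), Z - (U,Y) - X, and U - (Y,Z) - X. Suppose x, x' belong to different equivalence classes of the relation ≡ (the transitive closure of ~ as defined from p), and suppose there exists y with p(x, y) > 0 and p(x', y) > 0. Then there is no u with p(u | x) > 0 and p(u | x') > 0. -/
import Mathlib


open Finset

open Classical in
noncomputable def prob {Ω α : Type*} [Fintype Ω] (p : Ω → ℝ) (X : Ω → α) (x : α) : ℝ :=
  ∑ ω, if X ω = x then p ω else 0

noncomputable def H2 {Ω α : Type*} [Fintype Ω] [Fintype α] (p : Ω → ℝ) (X : Ω → α) : ℝ :=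
  -∑ x, prob p X x * Real.logb 2 (prob p X x)

noncomputable def condH {Ω α β : Type*} [Fintype Ω] [Fintype α] [Fintype β]
    (p : Ω → ℝ) (X : Ω → α) (Y : Ω → β) : ℝ :=
  -∑ x, ∑ y, prob p (fun ω => (X ω, Y ω)) (x, y) *
      Real.logb 2 (prob p (fun ω => (X ω, Y ω)) (x, y) / prob p Y y)

noncomputable def MI {Ω α β : Type*} [Fintype Ω] [Fintype α] [Fintype β]
    (p : Ω → ℝ) (X : Ω → α) (Y : Ω → β) : ℝ :=
  ∑ x, ∑ y, prob p (fun ω => (X ω, Y ω)) (x, y) *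
      Real.logb 2 (prob p (fun ω => (X ω, Y ω)) (x, y) / (prob p X x * prob p Y y))

noncomputable def condMI {Ω α β γ : Type*} [Fintype Ω] [Fintype α] [Fintype β] [Fintype γ]
    (p : Ω → ℝ) (X : Ω → α) (Y : Ω → β) (Z : Ω → γ) : ℝ :=
  ∑ x, ∑ y, ∑ z, prob p (fun ω => (X ω, Y ω, Z ω)) (x, y, z) *
      Real.logb 2 (prob p (fun ω => (X ω, Y ω, Z ω)) (x, y, z) * prob p Z z /
        (prob p (fun ω => (X ω, Z ω)) (x, z) * prob p (fun ω => (Y ω, Z ω)) (y, z)))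

def IsPMF {Ω : Type*} [Fintype Ω] (p : Ω → ℝ) : Prop :=
  (∀ ω, 0 ≤ p ω) ∧ ∑ ω, p ω = 1

def MarkovChain {Ω α β γ : Type*} [Fintype Ω] (p : Ω → ℝ)
    (A : Ω → α) (B : Ω → β) (C : Ω → γ) : Prop :=
  ∀ a b c, prob p (fun ω => (A ω, B ω, C ω)) (a, b, c) * prob p B b =
    prob p (fun ω => (A ω, B ω)) (a, b) * prob p (fun ω => (C ω, B ω)) (c, b)


lemma prob_pos_iff {Ω α : Type*} [Fintype Ω] {p : Ω → ℝ} (hp : ∀ ω, 0 ≤ p ω)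
    (W : Ω → α) (w : α) : 0 < prob p W w ↔ ∃ ω, W ω = w ∧ 0 < p ω := by
  classical
  simp only [prob]
  constructor
  · intro h
    by_contra hc
    push_neg at hc
    have hz : ∑ ω, (if W ω = w then p ω else 0) = 0 := by
      apply Finset.sum_eq_zero
      intro ω _
      split
      · next hw => exact le_antisymm (hc ω hw) (hp ω)
      · rfl
    rw [hz] at h
    exact lt_irrefl 0 h
  · rintro ⟨ω, hw, hpos⟩
    apply Finset.sum_pos'
    · intro i _
      split
      · exact hp i
      · exact le_refl 0
    · exact ⟨ω, Finset.mem_univ ω, by rw [if_pos hw]; exact hpos⟩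

lemma prob_pos_of {Ω α : Type*} [Fintype Ω] {p : Ω → ℝ} (hp : ∀ ω, 0 ≤ p ω)
    (W : Ω → α) {ω : Ω} (h : 0 < p ω) : 0 < prob p W (W ω) :=
  (prob_pos_iff hp W (W ω)).mpr ⟨ω, rfl, h⟩

lemma prob_nonneg {Ω α : Type*} [Fintype Ω] {p : Ω → ℝ} (hp : ∀ ω, 0 ≤ p ω)
    (W : Ω → α) (w : α) : 0 ≤ prob p W w := by
  classical
  simp only [prob]
  apply Finset.sum_nonneg
  intro i _
  split
  · exact hp i
  · exact le_refl 0

/-- if x and x' are in different ≡-classes (≡ the chain closure of ~)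
but share a compatible y, then no message u has positive probability at both x and x'. -/
theorem stmt11 {Ω 𝒳 𝒴 𝒰 𝒵 : Type*} [Fintype Ω]
    (p : Ω → ℝ) (hp : IsPMF p)
    (X : Ω → 𝒳) (Y : Ω → 𝒴) (U : Ω → 𝒰) (Z : Ω → 𝒵)
    (hA : MarkovChain p U X (fun ω => (Y ω, Z ω)))
    (hB : MarkovChain p Z (fun ω => (U ω, Y ω)) X)
    (hC : MarkovChain p U (fun ω => (Y ω, Z ω)) X)
    (x x' : 𝒳)
    (hneq : ¬ Relation.ReflTransGen
      (fun a b : 𝒳 => ∃ y z,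
        0 < prob p (fun ω => (X ω, Y ω)) (a, y) ∧
        0 < prob p (fun ω => (X ω, Y ω)) (b, y) ∧
        0 < prob p (fun ω => (Z ω, X ω, Y ω)) (z, a, y) ∧
        0 < prob p (fun ω => (Z ω, X ω, Y ω)) (z, b, y)) x x')
    (hy : ∃ y, 0 < prob p (fun ω => (X ω, Y ω)) (x, y) ∧
      0 < prob p (fun ω => (X ω, Y ω)) (x', y)) :
    ¬ ∃ u, 0 < prob p (fun ω => (U ω, X ω)) (u, x) ∧
      0 < prob p (fun ω => (U ω, X ω)) (u, x') := by
  have hp0 := hp.1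
  rintro ⟨u, hux, hux'⟩
  obtain ⟨y, hxy, hx'y⟩ := hy
  obtain ⟨ω0, hw0, hq0⟩ := (prob_pos_iff hp0 _ _).mp hxy
  obtain ⟨ω0', hw0', hq0'⟩ := (prob_pos_iff hp0 _ _).mp hx'y
  have hX0 : X ω0 = x := congrArg Prod.fst hw0
  have hY0 : Y ω0 = y := congrArg Prod.snd hw0
  have hX0' : X ω0' = x' := congrArg Prod.fst hw0'
  have hY0' : Y ω0' = y := congrArg Prod.snd hw0'
  have hAx := hA u x (y, Z ω0)
  beta_reduce at hAx
  have hYZX : 0 < prob p (fun ω => ((Y ω, Z ω), X ω)) ((y, Z ω0), x) :=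
    (prob_pos_iff hp0 _ _).mpr ⟨ω0, by simp [hX0, hY0], hq0⟩
  have htrip1 : 0 < prob p (fun ω => (U ω, X ω, Y ω, Z ω)) (u, x, y, Z ω0) := by
    have hrhs : 0 < prob p (fun ω => (U ω, X ω)) (u, x) *
        prob p (fun ω => ((Y ω, Z ω), X ω)) ((y, Z ω0), x) := mul_pos hux hYZX
    rw [← hAx] at hrhs
    have hnn := prob_nonneg hp0 (fun ω => (U ω, X ω, Y ω, Z ω)) (u, x, y, Z ω0)
    have hXnn := prob_nonneg hp0 X x
    nlinarith
  obtain ⟨ω1, hw1, hpω1⟩ := (prob_pos_iff hp0 _ _).mp htrip1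
  have hU1 : U ω1 = u := congrArg Prod.fst hw1
  have hX1 : X ω1 = x := congrArg Prod.fst (congrArg Prod.snd hw1)
  have hY1 : Y ω1 = y := congrArg Prod.fst (congrArg Prod.snd (congrArg Prod.snd hw1))
  have hAx' := hA u x' (y, Z ω0')
  beta_reduce at hAx'
  have hYZX' : 0 < prob p (fun ω => ((Y ω, Z ω), X ω)) ((y, Z ω0'), x') :=
    (prob_pos_iff hp0 _ _).mpr ⟨ω0', by simp [hX0', hY0'], hq0'⟩
  have htrip2 : 0 < prob p (fun ω => (U ω, X ω, Y ω, Z ω)) (u, x', y, Z ω0') := by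
    have hrhs : 0 < prob p (fun ω => (U ω, X ω)) (u, x') *
        prob p (fun ω => ((Y ω, Z ω), X ω)) ((y, Z ω0'), x') := mul_pos hux' hYZX'
    rw [← hAx'] at hrhs
    have hnn := prob_nonneg hp0 (fun ω => (U ω, X ω, Y ω, Z ω)) (u, x', y, Z ω0')
    have hXnn := prob_nonneg hp0 X x'
    nlinarith
  obtain ⟨ω2, hw2, hpω2⟩ := (prob_pos_iff hp0 _ _).mp htrip2
  have hU2 : U ω2 = u := congrArg Prod.fst hw2
  have hX2 : X ω2 = x' := congrArg Prod.fst (congrArg Prod.snd hw2)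
  have hY2 : Y ω2 = y := congrArg Prod.fst (congrArg Prod.snd (congrArg Prod.snd hw2))
  have hBz := hB (Z ω1) (u, y) x'
  beta_reduce at hBz
  have hUY : 0 < prob p (fun ω => (U ω, Y ω)) (u, y) :=
    (prob_pos_iff hp0 _ _).mpr ⟨ω1, by simp [hU1, hY1], hpω1⟩
  have hZUY : 0 < prob p (fun ω => (Z ω, U ω, Y ω)) (Z ω1, u, y) :=
    (prob_pos_iff hp0 _ _).mpr ⟨ω1, by simp [hU1, hY1], hpω1⟩
  have hXUY : 0 < prob p (fun ω => (X ω, U ω, Y ω)) (x', u, y) :=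
    (prob_pos_iff hp0 _ _).mpr ⟨ω2, by simp [hU2, hX2, hY2], hpω2⟩
  have htrip3 : 0 < prob p (fun ω => (Z ω, (U ω, Y ω), X ω)) (Z ω1, (u, y), x') := by
    have hrhs : 0 < prob p (fun ω => (Z ω, U ω, Y ω)) (Z ω1, u, y) *
        prob p (fun ω => (X ω, U ω, Y ω)) (x', u, y) := mul_pos hZUY hXUY
    rw [← hBz] at hrhs
    have hnn := prob_nonneg hp0 (fun ω => (Z ω, (U ω, Y ω), X ω)) (Z ω1, (u, y), x')
    nlinarith
  obtain ⟨ω3, hw3, hpω3⟩ := (prob_pos_iff hp0 _ _).mp htrip3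
  have hZ3 : Z ω3 = Z ω1 := congrArg Prod.fst hw3
  have hU3 : U ω3 = u := congrArg Prod.fst (congrArg Prod.fst (congrArg Prod.snd hw3))
  have hY3 : Y ω3 = y := congrArg Prod.snd (congrArg Prod.fst (congrArg Prod.snd hw3))
  have hX3 : X ω3 = x' := congrArg Prod.snd (congrArg Prod.snd hw3)
  apply hneq
  apply Relation.ReflTransGen.single
  refine ⟨y, Z ω1, hxy, hx'y, ?_, ?_⟩
  · exact (prob_pos_iff hp0 _ _).mpr ⟨ω1, by simp [hX1, hY1], hpω1⟩
  · exact (prob_pos_iff hp0 _ _).mpr ⟨ω3, by simp [hX3, hY3, hZ3], hpω3⟩
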